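/- arXiv:1209.2517 — 2 statements merged into one kernel-verified Lean document; each statement's English description precedes it below -/
import Mathlib

section
/- The functions ψ₀(r) = r²/(1+r²)² and ψ₁(r) = (r⁴ + 4r² log r − 1)/(1+r²)² are solutions on (0,∞) of the homogeneous linear ODE L₀ m = 0, where L₀ m = −m'' − ((3r²−1)/(r(1+r²))) m' − (8/(1+r²)²) m. -/
open Real

noncomputable def psi0 (r : ℝ) : ℝ := r ^ 2 / (1 + r ^ 2) ^ 2

noncomputable def psi1 (r : ℝ) : ℝ := (r ^ 4 + 4 * r ^ 2 * Real.log r - 1) / (1 + r ^ 2) ^ 2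

/-- The linearized partial-mass operator `L₀m = -m'' - ((3r²-1)/(r(1+r²)))m' - (8/(1+r²)²)m`. -/
noncomputable def L0 (m : ℝ → ℝ) (r : ℝ) : ℝ :=
  -(deriv (deriv m) r) - ((3 * r ^ 2 - 1) / (r * (1 + r ^ 2))) * deriv m r
    - (8 / (1 + r ^ 2) ^ 2) * m r

open Filter Topology

theorem HasDerivAt.div_one_add_sq_pow {p : ℝ → ℝ} {p' r : ℝ} (hp : HasDerivAt p p' r) (n : ℕ) :
    HasDerivAt (fun x => p x / (1 + x ^ 2) ^ n)
      ((p' * (1 + r ^ 2) - 2 * n * r * p r) / (1 + r ^ 2) ^ (n + 1)) r := by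
  have hden := ((hasDerivAt_pow 2 r).const_add 1).fun_pow n
  refine (hp.div hden (by positivity)).congr_deriv ?_
  rcases n with _ | n
  · field_simp
    simp
  · simp only [Nat.add_sub_cancel]
    field_simp
    push_cast
    ring

theorem L0_eq_of_hasDerivAt {m m' : ℝ → ℝ} {m'' r : ℝ}
    (hm : ∀ᶠ x in 𝓝 r, HasDerivAt m (m' x) x) (hm' : HasDerivAt m' m'' r) :
    L0 m r = -m'' - ((3 * r ^ 2 - 1) / (r * (1 + r ^ 2))) * m' r
      - (8 / (1 + r ^ 2) ^ 2) * m r := by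
  have hderiv : deriv m =ᶠ[𝓝 r] m' := hm.mono fun x hx => hx.deriv
  rw [L0, hderiv.deriv_eq, hm'.deriv, hm.self_of_nhds.deriv]

theorem L0_psi0 {r : ℝ} (hr : r ≠ 0) : L0 psi0 r = 0 := by
  have hpsi0 (x : ℝ) : HasDerivAt psi0 ((2 * x - 2 * x ^ 3) / (1 + x ^ 2) ^ 3) x := by
    refine ((hasDerivAt_pow 2 x).div_one_add_sq_pow 2).congr_deriv ?_
    push_cast
    ring
  have hpsi0' : HasDerivAt (fun x => (2 * x - 2 * x ^ 3) / (1 + x ^ 2) ^ 3)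
      ((2 - 16 * r ^ 2 + 6 * r ^ 4) / (1 + r ^ 2) ^ 4) r := by
    have hnum : HasDerivAt (fun x : ℝ => 2 * x - 2 * x ^ 3) (2 - 6 * r ^ 2) r := by
      refine (((hasDerivAt_id' r).const_mul 2).fun_sub
        ((hasDerivAt_pow 3 r).const_mul 2)).congr_deriv ?_
      push_cast
      ring
    refine (hnum.div_one_add_sq_pow 3).congr_deriv ?_
    push_cast
    ring
  rw [L0_eq_of_hasDerivAt (.of_forall hpsi0) hpsi0', psi0]
  field_simp
  ring

theorem L0_psi1 {r : ℝ} (hr : r ≠ 0) : L0 psi1 r = 0 := by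
  have hpsi1 {x : ℝ} (hx : x ≠ 0) : HasDerivAt psi1
      ((8 * x + 8 * x ^ 3 + (8 * x - 8 * x ^ 3) * log x) / (1 + x ^ 2) ^ 3) x := by
    have hnum : HasDerivAt (fun x => x ^ 4 + 4 * x ^ 2 * log x - 1)
        (4 * x ^ 3 + 8 * x * log x + 4 * x) x := by
      refine (((hasDerivAt_pow 4 x).add (((hasDerivAt_pow 2 x).const_mul 4).mul
        (hasDerivAt_log hx))).sub_const 1).congr_deriv ?_
      field_simp
      ring
    refine (hnum.div_one_add_sq_pow 2).congr_deriv ?_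
    push_cast
    ring
  have hpsi1' : HasDerivAt
      (fun x => (8 * x + 8 * x ^ 3 + (8 * x - 8 * x ^ 3) * log x) / (1 + x ^ 2) ^ 3)
      (((16 + 16 * r ^ 2 + (8 - 24 * r ^ 2) * log r) * (1 + r ^ 2)
          - 6 * r * (8 * r + 8 * r ^ 3 + (8 * r - 8 * r ^ 3) * log r)) / (1 + r ^ 2) ^ 4) r := by
    have hnum : HasDerivAt (fun x => 8 * x + 8 * x ^ 3 + (8 * x - 8 * x ^ 3) * log x)
        (16 + 16 * r ^ 2 + (8 - 24 * r ^ 2) * log r) r := by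
      have hlin := (hasDerivAt_id' r).const_mul (8 : ℝ)
      have hcub := (hasDerivAt_pow 3 r).const_mul (8 : ℝ)
      refine ((hlin.fun_add hcub).fun_add
        ((hlin.fun_sub hcub).fun_mul (hasDerivAt_log hr))).congr_deriv ?_
      field_simp
      ring
    refine (hnum.div_one_add_sq_pow 3).congr_deriv ?_
    push_cast
    ring
  have hnear : ∀ᶠ x in 𝓝 r, x ≠ 0 := isOpen_ne.mem_nhds hr
  rw [L0_eq_of_hasDerivAt (hnear.mono fun x hx => hpsi1 hx) hpsi1', psi1]
  field_simp
  ring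

/-- `ψ₀(r) = r²/(1+r²)²` and `ψ₁(r) = (r⁴+4r²log r−1)/(1+r²)²` solve `L₀m = 0` on `(0,∞)`. -/
theorem psi0_psi1_solve_L0 (r : ℝ) (hr : 0 < r) : L0 psi0 r = 0 ∧ L0 psi1 r = 0 :=
  ⟨L0_psi0 hr.ne', L0_psi1 hr.ne'⟩
end

section
/- Weighted second-derivative control: for p ∈ {1,2} and every u ∈ C_c^∞(ℝ²), ∫_{ℝ²} |x|^{2p} |∇²u|² dx ≤ C ( ∫ |x|^{2p} |Δu|² dx + ∫ |x|^{2p−2} |∇u|² dx ) for a universal constant C (in fact one may take C depending only on p). -/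
open MeasureTheory Real

/-- The second partial derivative `∂_{ij} u`. -/
noncomputable def secondPartial (u : EuclideanSpace ℝ (Fin 2) → ℝ) (i j : Fin 2)
    (x : EuclideanSpace ℝ (Fin 2)) : ℝ :=
  fderiv ℝ (fun y => fderiv ℝ u y (EuclideanSpace.single j 1)) x (EuclideanSpace.single i 1)

section WeightedHessianAux

noncomputable abbrev E2' := EuclideanSpace ℝ (Fin 2)

/-- The `i`-th standard basis vector of `ℝ²`. -/
noncomputable def ee (i : Fin 2) : E2' := EuclideanSpace.single i 1

/-- The partial derivative of `f` in direction `ee i`. -/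
noncomputable def pd (f : E2' → ℝ) (i : Fin 2) (x : E2') : ℝ := fderiv ℝ f x (ee i)

lemma norm_ee (i : Fin 2) : ‖ee i‖ = 1 := by simp [ee]

noncomputable def eqEP : E2' ≃ᵐ (ℝ × ℝ) :=
  (MeasurableEquiv.toLp 2 (Fin 2 → ℝ)).symm.trans (MeasurableEquiv.finTwoArrow)

noncomputable def ψ (q : ℝ × ℝ) : E2' := eqEP.symm q

lemma eqEP_mp : MeasurePreserving eqEP :=
  (volume_preserving_finTwoArrow ℝ).comp
    (EuclideanSpace.volume_preserving_symm_measurableEquiv_toLp (Fin 2))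

lemma ψ_eq (s t : ℝ) : ψ (s, t) = s • ee 0 + t • ee 1 := by
  have h : ∀ i : Fin 2, ψ (s, t) i = (s • ee 0 + t • ee 1) i := by
    intro i
    match i with
    | 0 => simp [ψ, eqEP, ee, EuclideanSpace.single_apply]
    | 1 => simp [ψ, eqEP, ee, EuclideanSpace.single_apply]
  exact PiLp.ext h

lemma int1d (g : ℝ → ℝ) (hg : ContDiff ℝ 1 g) (hs : HasCompactSupport g) :
    ∫ t, deriv g t = 0 := by
  have hi : Integrable (deriv g) :=
    (hg.continuous_deriv le_rfl).integrable_of_hasCompactSupport hs.deriv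
  rw [← intervalIntegral.integral_Iic_add_Ioi (b := 0) hi.integrableOn hi.integrableOn,
    hs.integral_Iic_deriv_eq hg 0, hs.integral_Ioi_deriv_eq hg 0]
  ring

lemma slice_hasDerivAt (f : E2' → ℝ) (hf : ContDiff ℝ 1 f) (c : E2') (v : E2') (s : ℝ) :
    HasDerivAt (fun s' => f (c + s' • v)) (fderiv ℝ f (c + s • v) v) s := by
  have h1 : HasDerivAt (fun s' : ℝ => c + s' • v) v s := by
    simpa using ((hasDerivAt_id s).smul_const v).const_add c
  exact ((hf.differentiable one_ne_zero (c + s • v)).hasFDerivAt).comp_hasDerivAt s h1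

lemma slice_contDiff (f : E2' → ℝ) (hf : ContDiff ℝ 1 f) (c : E2') (v : E2') :
    ContDiff ℝ 1 (fun s : ℝ => f (c + s • v)) :=
  hf.comp (contDiff_const.add (contDiff_id.smul contDiff_const))

lemma slice_support (f : E2' → ℝ) (hs : HasCompactSupport f) (c : E2') (v : E2')
    (hv : ‖v‖ = 1) : HasCompactSupport (fun s : ℝ => f (c + s • v)) := by
  have hiso : Isometry (fun s : ℝ => c + s • v) := by
    apply Isometry.of_dist_eq
    intro a b
    simp only [dist_eq_norm]
    have h : c + a • v - (c + b • v) = (a - b) • v := by module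
    rw [h, norm_smul, hv, mul_one, Real.norm_eq_abs]
  exact hs.comp_isClosedEmbedding hiso.isClosedEmbedding

lemma integral_pd_zero (f : E2' → ℝ) (hf : ContDiff ℝ 1 f) (hs : HasCompactSupport f)
    (i : Fin 2) : ∫ x, pd f i x = 0 := by
  have hcont : Continuous (pd f i) :=
    (ContinuousLinearMap.apply ℝ ℝ (ee i)).continuous.comp (hf.continuous_fderiv one_ne_zero)
  have hsupp : HasCompactSupport (pd f i) := hs.fderiv_apply ℝ (ee i)
  have hint : Integrable (pd f i) := hcont.integrable_of_hasCompactSupport hsupp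
  have hemb : MeasurableEmbedding (ψ) := eqEP.symm.measurableEmbedding
  have hmp : MeasurePreserving (ψ) := eqEP_mp.symm
  have hcomp : ∫ q : ℝ × ℝ, pd f i (ψ q) = ∫ x, pd f i x :=
    hmp.integral_comp hemb _
  have hintG : Integrable (fun q : ℝ × ℝ => pd f i (ψ q)) :=
    (hmp.integrable_comp_emb hemb).mpr hint
  rw [← hcomp]
  match i with
  | 0 =>
    rw [MeasureTheory.Measure.volume_eq_prod] at hintG ⊢
    rw [MeasureTheory.integral_prod_symm _ hintG]
    have h : ∀ t : ℝ, (∫ s : ℝ, pd f 0 (ψ (s, t))) = 0 := by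
      intro t
      have hkey : ∀ s : ℝ, pd f 0 (ψ (s, t)) = deriv (fun s' => f (t • ee 1 + s' • ee 0)) s := by
        intro s
        rw [(slice_hasDerivAt f hf (t • ee 1) (ee 0) s).deriv]
        have h2 : t • ee 1 + s • ee 0 = ψ (s, t) := by rw [ψ_eq]; module
        rw [h2]; rfl
      simp_rw [hkey]
      exact int1d _ (slice_contDiff f hf _ _) (slice_support f hs _ _ (norm_ee 0))
    simp_rw [h, integral_zero]
  | 1 =>
    rw [MeasureTheory.Measure.volume_eq_prod] at hintG ⊢
    rw [MeasureTheory.integral_prod _ hintG]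
    have h : ∀ s : ℝ, (∫ t : ℝ, pd f 1 (ψ (s, t))) = 0 := by
      intro s
      have hkey : ∀ t : ℝ, pd f 1 (ψ (s, t)) = deriv (fun t' => f (s • ee 0 + t' • ee 1)) t := by
        intro t
        rw [(slice_hasDerivAt f hf (s • ee 0) (ee 1) t).deriv]
        rw [← ψ_eq]; rfl
      simp_rw [hkey]
      exact int1d _ (slice_contDiff f hf _ _) (slice_support f hs _ _ (norm_ee 1))
    simp_rw [h, integral_zero]

lemma pd_contDiff {f : E2' → ℝ} (hf : ContDiff ℝ (⊤ : ℕ∞) f) (i : Fin 2) : ContDiff ℝ (⊤ : ℕ∞) (pd f i) :=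
  (hf.fderiv_right (by simp)).clm_apply contDiff_const

lemma pd_support {f : E2' → ℝ} (hs : HasCompactSupport f) (i : Fin 2) :
    HasCompactSupport (pd f i) := hs.fderiv_apply ℝ (ee i)

lemma pd_tsupport (f : E2' → ℝ) (i : Fin 2) : tsupport (pd f i) ⊆ tsupport f := by
  apply closure_minimal _ (isClosed_tsupport f)
  intro x hx
  have h : fderiv ℝ f x ≠ 0 := by
    intro h
    apply hx
    simp [pd, h]
  exact support_fderiv_subset ℝ h

lemma pd_mul {f g : E2' → ℝ} (hf : ContDiff ℝ (⊤ : ℕ∞) f) (hg : ContDiff ℝ (⊤ : ℕ∞) g) (i : Fin 2) (x : E2') :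
    pd (fun y => f y * g y) i x = pd f i x * g x + f x * pd g i x := by
  unfold pd
  rw [fderiv_fun_mul (hf.differentiable (by simp) x) (hg.differentiable (by simp) x)]
  simp [smul_eq_mul]
  ring

lemma ibp (f g : E2' → ℝ) (hf : ContDiff ℝ (⊤ : ℕ∞) f) (hg : ContDiff ℝ (⊤ : ℕ∞) g)
    (hgs : HasCompactSupport g) (i : Fin 2) :
    ∫ x, pd f i x * g x = - ∫ x, f x * pd g i x := by
  have hfgs : HasCompactSupport (fun x => f x * g x) := hgs.mul_left
  have h0 := integral_pd_zero _ ((hf.mul hg).of_le (by simp)) hfgs i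
  have int1 : Integrable (fun x => pd f i x * g x) :=
    ((pd_contDiff hf i).continuous.mul hg.continuous).integrable_of_hasCompactSupport
      hgs.mul_left
  have int2 : Integrable (fun x => f x * pd g i x) :=
    (hf.continuous.mul (pd_contDiff hg i).continuous).integrable_of_hasCompactSupport
      (pd_support hgs i).mul_left
  simp_rw [pd_mul hf hg i] at h0
  rw [integral_add int1 int2] at h0
  linarith

lemma pd_pd_eq {f : E2' → ℝ} (hf : ContDiff ℝ (⊤ : ℕ∞) f) (i j : Fin 2) (x : E2') :
    pd (pd f j) i x = fderiv ℝ (fderiv ℝ f) x (ee i) (ee j) := by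
  have hd : DifferentiableAt ℝ (fderiv ℝ f) x :=
    ((hf.fderiv_right (m := (⊤ : ℕ∞)) (by simp)).differentiable (by simp)).differentiableAt
  have h : HasFDerivAt (fun y => (fderiv ℝ f y) (ee j))
      ((ContinuousLinearMap.apply ℝ ℝ (ee j)).comp (fderiv ℝ (fderiv ℝ f) x)) x :=
    (ContinuousLinearMap.apply ℝ ℝ (ee j)).hasFDerivAt.comp x hd.hasFDerivAt
  show fderiv ℝ (fun y => (fderiv ℝ f y) (ee j)) x (ee i) = _
  rw [h.fderiv]
  rfl

lemma pd_comm {f : E2' → ℝ} (hf : ContDiff ℝ (⊤ : ℕ∞) f) (i j : Fin 2) (x : E2') :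
    pd (pd f j) i x = pd (pd f i) j x := by
  rw [pd_pd_eq hf, pd_pd_eq hf]
  exact second_derivative_symmetric
    (fun y => (hf.differentiable (by simp) y).hasFDerivAt)
    (((hf.fderiv_right (m := (⊤ : ℕ∞)) (by simp)).differentiable (by simp) x).hasFDerivAt) (ee i) (ee j)

lemma w_contDiff (p : ℕ) : ContDiff ℝ (⊤ : ℕ∞) (fun x : E2' => ‖x‖ ^ (2 * p)) := by
  have h : (fun x : E2' => ‖x‖ ^ (2 * p)) = fun x : E2' => (‖x‖ ^ 2) ^ p := by
    funext x; rw [← pow_mul]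
  rw [h]
  exact (contDiff_norm_sq (E := E2') ℝ).pow p

lemma w_hasFDerivAt (p : ℕ) (x : E2') :
    HasFDerivAt (fun x : E2' => ‖x‖ ^ (2 * p))
      ((p * (‖x‖ ^ 2) ^ (p - 1)) • (2 • (innerSL ℝ x))) x := by
  have h1 : HasFDerivAt (fun x : E2' => ‖x‖ ^ 2) (2 • (innerSL ℝ x)) x := by
    simpa using (hasFDerivAt_id x).norm_sq
  have h2 := (hasDerivAt_pow p (‖x‖ ^ 2)).comp_hasFDerivAt x h1
  have h : (fun x : E2' => ‖x‖ ^ (2 * p)) = fun x : E2' => (‖x‖ ^ 2) ^ p := by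
    funext x; rw [← pow_mul]
  rw [h]
  exact h2

lemma pdw_bound (p : ℕ) (hp : 1 ≤ p) (i : Fin 2) (x : E2') :
    |pd (fun x : E2' => ‖x‖ ^ (2 * p)) i x| ≤ 2 * p * (‖x‖ ^ p * ‖x‖ ^ (p - 1)) := by
  unfold pd
  rw [(w_hasFDerivAt p x).fderiv]
  have hinner : |(inner ℝ x (ee i) : ℝ)| ≤ ‖x‖ := by
    have := abs_real_inner_le_norm x (ee i)
    rwa [norm_ee, mul_one] at this
  have hval : ((p * (‖x‖ ^ 2) ^ (p - 1)) • (2 • (innerSL ℝ x))) (ee i)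
      = p * (‖x‖ ^ 2) ^ (p - 1) * (2 * (inner ℝ x (ee i) : ℝ)) := by
    simp [smul_eq_mul]
  rw [hval]
  have hA : (0:ℝ) ≤ (p : ℝ) * (‖x‖ ^ 2) ^ (p - 1) := by positivity
  have hsq : (‖x‖ ^ 2) ^ (p - 1) = ‖x‖ ^ (p-1) * ‖x‖ ^ (p-1) := by
    rw [← pow_add, ← pow_mul]; congr 1; omega
  have hp2 : ‖x‖ ^ p = ‖x‖ ^ (p-1) * ‖x‖ := by
    rw [← pow_succ]; congr 1; omega
  calc |(p : ℝ) * (‖x‖ ^ 2) ^ (p - 1) * (2 * (inner ℝ x (ee i) : ℝ))|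
      = (p : ℝ) * (‖x‖ ^ 2) ^ (p - 1) * (2 * |(inner ℝ x (ee i) : ℝ)|) := by
        rw [abs_mul, abs_mul, abs_mul, Nat.abs_cast, abs_two,
          abs_of_nonneg (by positivity : (0:ℝ) ≤ (‖x‖^2)^(p-1))]
    _ ≤ (p : ℝ) * (‖x‖ ^ 2) ^ (p - 1) * (2 * ‖x‖) := by
        apply mul_le_mul_of_nonneg_left (by linarith) hA
    _ = 2 * p * (‖x‖ ^ p * ‖x‖ ^ (p - 1)) := by rw [hsq, hp2]; ring

lemma absorb_one (P np np1 W c g : ℝ) (hnp : 0 ≤ np) (hnp1 : 0 ≤ np1) (hP : 0 ≤ P)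
    (hW : |W| ≤ 2*P*(np*np1)) :
    2*g*(W*c) ≤ (1/2)*(np*c)^2 + 8*P^2*(np1*g)^2 := by
  have h2 : 2*g*(W*c) ≤ 2*(|g| * (|W| * |c|)) := by
    calc 2*g*(W*c) ≤ |2*g*(W*c)| := le_abs_self _
      _ = 2*(|g| * (|W| * |c|)) := by rw [abs_mul, abs_mul, abs_mul, abs_two]; ring
  have h3 : |W| * |c| ≤ 2*P*(np*np1)*|c| := mul_le_mul_of_nonneg_right hW (abs_nonneg c)
  have h4 : 2*(|g| * (|W| * |c|)) ≤ 2*(|g| * (2*P*(np*np1) * |c|)) := by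
    have := mul_le_mul_of_nonneg_left h3 (abs_nonneg g)
    linarith
  have h5 : 2*(|g| * (2*P*(np*np1) * |c|)) ≤ (1/2)*(np * |c|)^2 + 8*P^2*(np1 * |g|)^2 := by
    nlinarith [sq_nonneg (np * |c| - 4*P*(np1 * |g|)), abs_nonneg g, abs_nonneg c]
  have h6 : (np * |c|)^2 = (np*c)^2 := by rw [mul_pow, mul_pow, sq_abs]
  have h7 : (np1 * |g|)^2 = (np1*g)^2 := by rw [mul_pow, mul_pow, sq_abs]
  rw [h6, h7] at h5
  linarith

lemma absorb_two (P np np1 W0 W1 a b g : ℝ) (hnp : 0 ≤ np) (hnp1 : 0 ≤ np1) (hP : 0 ≤ P)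
    (hW0 : |W0| ≤ 2*P*(np*np1)) (hW1 : |W1| ≤ 2*P*(np*np1)) :
    2*g*(W1*a - W0*b) ≤ (1/2)*((np*a)^2 + (np*b)^2) + 16*P^2*(np1*g)^2 := by
  have h1 := absorb_one P np np1 W1 a g hnp hnp1 hP hW1
  have h2 := absorb_one P np np1 W0 b (-g) hnp hnp1 hP hW0
  nlinarith [h1, h2]

theorem main_aux (p : ℕ) (hp1 : 1 ≤ p) (hp2 : p ≤ 2) (u : E2' → ℝ)
    (hu : ContDiff ℝ (⊤ : ℕ∞) u) (hsu : HasCompactSupport u) :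
    (∫ x, ‖x‖ ^ (2 * p) *
        (pd (pd u 0) 0 x ^ 2 + pd (pd u 1) 0 x ^ 2 +
          (pd (pd u 0) 1 x ^ 2 + pd (pd u 1) 1 x ^ 2)))
      ≤ 128 * ((∫ x, ‖x‖ ^ (2 * p) * (pd (pd u 0) 0 x + pd (pd u 1) 1 x) ^ 2)
          + ∫ x : E2', ‖x‖ ^ (2 * p - 2) * ‖fderiv ℝ u x‖ ^ 2) := by
  -- continuity and support facts
  have hwC : ContDiff ℝ (⊤ : ℕ∞) (fun x : E2' => ‖x‖ ^ (2 * p)) := w_contDiff p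
  have hpuC : ∀ i : Fin 2, ContDiff ℝ (⊤ : ℕ∞) (pd u i) := fun i => pd_contDiff hu i
  have hDC : ∀ i j : Fin 2, ContDiff ℝ (⊤ : ℕ∞) (pd (pd u j) i) := fun i j =>
    pd_contDiff (hpuC j) i
  have hDDC : ∀ i j k : Fin 2, ContDiff ℝ (⊤ : ℕ∞) (pd (pd (pd u k) j) i) := fun i j k =>
    pd_contDiff (hDC j k) i
  have hwcont : Continuous (fun x : E2' => ‖x‖ ^ (2 * p)) := hwC.continuous
  have hpdwC : ∀ i : Fin 2, Continuous (pd (fun x : E2' => ‖x‖ ^ (2 * p)) i) :=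
    fun i => (pd_contDiff hwC i).continuous
  -- vanishing outside the support of u
  have hKu : ∀ i : Fin 2, ∀ x ∉ tsupport u, pd u i x = 0 := fun i x hx =>
    image_eq_zero_of_notMem_tsupport (fun h => hx (pd_tsupport u i h))
  have hKd : ∀ i j : Fin 2, ∀ x ∉ tsupport u, pd (pd u j) i x = 0 := fun i j x hx =>
    image_eq_zero_of_notMem_tsupport
      (fun h => hx (pd_tsupport u j (pd_tsupport (pd u j) i h)))
  have hKdd : ∀ i j k : Fin 2, ∀ x ∉ tsupport u, pd (pd (pd u k) j) i x = 0 :=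
    fun i j k x hx => image_eq_zero_of_notMem_tsupport
      (fun h => hx (pd_tsupport u k (pd_tsupport (pd u k) j (pd_tsupport (pd (pd u k) j) i h))))
  have hKf : ∀ x ∉ tsupport u, fderiv ℝ u x = 0 := fun x hx => by
    by_contra h
    exact hx (support_fderiv_subset ℝ h)
  -- integrability helper
  have intCC : ∀ (φ : E2' → ℝ), Continuous φ → (∀ x ∉ tsupport u, φ x = 0) → Integrable φ :=
    fun φ h h0 => h.integrable_of_hasCompactSupport (HasCompactSupport.intro hsu h0)
  -- symmetry facts
  have hcomm : ∀ x, pd (pd u 0) 1 x = pd (pd u 1) 0 x := fun x => pd_comm hu 1 0 x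
  have h3comm : ∀ x, pd (pd (pd u 1) 0) 0 x = pd (pd (pd u 0) 0) 1 x := by
    intro x
    have e1 : pd (pd u 1) 0 = pd (pd u 0) 1 := funext fun y => (pd_comm hu 1 0 y).symm ▸ rfl
    rw [e1]
    exact pd_comm (hpuC 0) 0 1 x
  -- integrability of all relevant integrands
  have intL : Integrable (fun x => ‖x‖ ^ (2 * p) *
      (pd (pd u 0) 0 x ^ 2 + pd (pd u 1) 0 x ^ 2 +
        (pd (pd u 0) 1 x ^ 2 + pd (pd u 1) 1 x ^ 2))) := by
    apply intCC
    · exact hwcont.mul ((((hDC 0 0).continuous.pow 2).add ((hDC 0 1).continuous.pow 2)).add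
        (((hDC 1 0).continuous.pow 2).add ((hDC 1 1).continuous.pow 2)))
    · intro x hx; rw [hKd 0 0 x hx, hKd 0 1 x hx, hKd 1 0 x hx, hKd 1 1 x hx]; ring
  have intR1 : Integrable (fun x => ‖x‖ ^ (2 * p) *
      (pd (pd u 0) 0 x + pd (pd u 1) 1 x) ^ 2) := by
    apply intCC
    · exact hwcont.mul (((hDC 0 0).continuous.add (hDC 1 1).continuous).pow 2)
    · intro x hx; rw [hKd 0 0 x hx, hKd 1 1 x hx]; ring
  have intR2 : Integrable (fun x : E2' => ‖x‖ ^ (2 * p - 2) * ‖fderiv ℝ u x‖ ^ 2) := by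
    apply intCC
    · exact (continuous_norm.pow _).mul ((hu.continuous_fderiv (by simp)).norm.pow 2)
    · intro x hx; rw [hKf x hx]; simp
  have intI1 : Integrable (fun x => ‖x‖ ^ (2 * p) * pd (pd u 1) 0 x ^ 2) := by
    apply intCC
    · exact hwcont.mul ((hDC 0 1).continuous.pow 2)
    · intro x hx; rw [hKd 0 1 x hx]; ring
  have intI2 : Integrable (fun x => ‖x‖ ^ (2 * p) * (pd (pd u 0) 0 x * pd (pd u 1) 1 x)) := by
    apply intCC
    · exact hwcont.mul ((hDC 0 0).continuous.mul (hDC 1 1).continuous)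
    · intro x hx; rw [hKd 0 0 x hx]; ring
  have intA : Integrable (fun x => pd u 1 x *
      (pd (fun y : E2' => ‖y‖ ^ (2 * p)) 0 x * pd (pd u 1) 0 x
        + ‖x‖ ^ (2 * p) * pd (pd (pd u 1) 0) 0 x)) := by
    apply intCC
    · exact (hpuC 1).continuous.mul (((hpdwC 0).mul (hDC 0 1).continuous).add
        (hwcont.mul (hDDC 0 0 1).continuous))
    · intro x hx; rw [hKu 1 x hx]; ring
  have intB : Integrable (fun x => pd u 1 x *
      (pd (fun y : E2' => ‖y‖ ^ (2 * p)) 1 x * pd (pd u 0) 0 x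
        + ‖x‖ ^ (2 * p) * pd (pd (pd u 0) 0) 1 x)) := by
    apply intCC
    · exact (hpuC 1).continuous.mul (((hpdwC 1).mul (hDC 0 0).continuous).add
        (hwcont.mul (hDDC 1 0 0).continuous))
    · intro x hx; rw [hKu 1 x hx]; ring
  have intJ : Integrable (fun x => pd u 1 x *
      (pd (fun y : E2' => ‖y‖ ^ (2 * p)) 1 x * pd (pd u 0) 0 x
        - pd (fun y : E2' => ‖y‖ ^ (2 * p)) 0 x * pd (pd u 1) 0 x)) := by
    apply intCC
    · exact (hpuC 1).continuous.mul (((hpdwC 1).mul (hDC 0 0).continuous).sub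
        ((hpdwC 0).mul (hDC 0 1).continuous))
    · intro x hx; rw [hKu 1 x hx]; ring
  have intM : Integrable (fun x => ‖x‖ ^ (2 * p) *
      (pd (pd u 0) 0 x ^ 2 + pd (pd u 1) 0 x ^ 2)) := by
    apply intCC
    · exact hwcont.mul (((hDC 0 0).continuous.pow 2).add ((hDC 0 1).continuous.pow 2))
    · intro x hx; rw [hKd 0 0 x hx, hKd 0 1 x hx]; ring
  -- Step 1: L = R1 + 2*I1 - 2*I2
  have e1 : ∀ x : E2', ‖x‖ ^ (2 * p) *
      (pd (pd u 0) 0 x ^ 2 + pd (pd u 1) 0 x ^ 2 +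
        (pd (pd u 0) 1 x ^ 2 + pd (pd u 1) 1 x ^ 2))
      = ‖x‖ ^ (2 * p) * (pd (pd u 0) 0 x + pd (pd u 1) 1 x) ^ 2
        + (2 * (‖x‖ ^ (2 * p) * pd (pd u 1) 0 x ^ 2)
          - 2 * (‖x‖ ^ (2 * p) * (pd (pd u 0) 0 x * pd (pd u 1) 1 x))) := by
    intro x; rw [hcomm x]; ring
  have hE1 : (∫ x, ‖x‖ ^ (2 * p) *
      (pd (pd u 0) 0 x ^ 2 + pd (pd u 1) 0 x ^ 2 +
        (pd (pd u 0) 1 x ^ 2 + pd (pd u 1) 1 x ^ 2)))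
      = (∫ x, ‖x‖ ^ (2 * p) * (pd (pd u 0) 0 x + pd (pd u 1) 1 x) ^ 2)
        + (2 * (∫ x, ‖x‖ ^ (2 * p) * pd (pd u 1) 0 x ^ 2)
          - 2 * (∫ x, ‖x‖ ^ (2 * p) * (pd (pd u 0) 0 x * pd (pd u 1) 1 x))) := by
    have intI1' : Integrable (fun x : E2' => 2 * (‖x‖ ^ (2 * p) * pd (pd u 1) 0 x ^ 2)) :=
      intI1.const_mul 2
    have intI2' : Integrable (fun x : E2' =>
        2 * (‖x‖ ^ (2 * p) * (pd (pd u 0) 0 x * pd (pd u 1) 1 x))) := intI2.const_mul 2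
    have intI12 : Integrable (fun x : E2' =>
        2 * (‖x‖ ^ (2 * p) * pd (pd u 1) 0 x ^ 2)
          - 2 * (‖x‖ ^ (2 * p) * (pd (pd u 0) 0 x * pd (pd u 1) 1 x))) := intI1'.sub intI2'
    simp_rw [e1]
    rw [integral_add intR1 intI12, integral_sub intI1' intI2',
      integral_const_mul, integral_const_mul]
  -- Step 2: integration by parts
  have key1 := ibp (pd u 1) (fun x => ‖x‖ ^ (2 * p) * pd (pd u 1) 0 x) (hpuC 1)
    (hwC.mul (hDC 0 1)) ((pd_support (pd_support hsu 1) 0).mul_left) 0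
  have key2 := ibp (pd u 1) (fun x => ‖x‖ ^ (2 * p) * pd (pd u 0) 0 x) (hpuC 1)
    (hwC.mul (hDC 0 0)) ((pd_support (pd_support hsu 0) 0).mul_left) 1
  simp_rw [pd_mul hwC (hDC 0 1) 0] at key1
  simp_rw [pd_mul hwC (hDC 0 0) 1] at key2
  -- rewrite the left-hand sides
  have lhs1 : (∫ x, pd (pd u 1) 0 x * (‖x‖ ^ (2 * p) * pd (pd u 1) 0 x))
      = ∫ x, ‖x‖ ^ (2 * p) * pd (pd u 1) 0 x ^ 2 := by
    congr 1; funext x; ring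
  have lhs2 : (∫ x, pd (pd u 1) 1 x * (‖x‖ ^ (2 * p) * pd (pd u 0) 0 x))
      = ∫ x, ‖x‖ ^ (2 * p) * (pd (pd u 0) 0 x * pd (pd u 1) 1 x) := by
    congr 1; funext x; ring
  rw [lhs1] at key1
  rw [lhs2] at key2
  -- Step 3: I1 - I2 = J
  have hBA : (∫ x, pd u 1 x *
        (pd (fun y : E2' => ‖y‖ ^ (2 * p)) 1 x * pd (pd u 0) 0 x
          + ‖x‖ ^ (2 * p) * pd (pd (pd u 0) 0) 1 x))
      - (∫ x, pd u 1 x *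
        (pd (fun y : E2' => ‖y‖ ^ (2 * p)) 0 x * pd (pd u 1) 0 x
          + ‖x‖ ^ (2 * p) * pd (pd (pd u 1) 0) 0 x))
      = ∫ x, pd u 1 x *
        (pd (fun y : E2' => ‖y‖ ^ (2 * p)) 1 x * pd (pd u 0) 0 x
          - pd (fun y : E2' => ‖y‖ ^ (2 * p)) 0 x * pd (pd u 1) 0 x) := by
    rw [← integral_sub intB intA]
    congr 1; funext x
    rw [h3comm x]; ring
  -- Step 4: pointwise absorption bound
  have hpt : ∀ x : E2', 2 * (pd u 1 x *
      (pd (fun y : E2' => ‖y‖ ^ (2 * p)) 1 x * pd (pd u 0) 0 x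
        - pd (fun y : E2' => ‖y‖ ^ (2 * p)) 0 x * pd (pd u 1) 0 x))
      ≤ (1/2) * (‖x‖ ^ (2 * p) * (pd (pd u 0) 0 x ^ 2 + pd (pd u 1) 0 x ^ 2))
        + 16 * (p:ℝ)^2 * (‖x‖ ^ (2 * p - 2) * ‖fderiv ℝ u x‖ ^ 2) := by
    intro x
    have hb := absorb_two (p:ℝ) (‖x‖ ^ p) (‖x‖ ^ (p-1))
      (pd (fun y : E2' => ‖y‖ ^ (2 * p)) 0 x) (pd (fun y : E2' => ‖y‖ ^ (2 * p)) 1 x)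
      (pd (pd u 0) 0 x) (pd (pd u 1) 0 x) (pd u 1 x)
      (by positivity) (by positivity) (by positivity)
      (pdw_bound p hp1 0 x) (pdw_bound p hp1 1 x)
    have hnp2 : (‖x‖ ^ p) ^ 2 = ‖x‖ ^ (2 * p) := by rw [← pow_mul]; congr 1; omega
    have hnp12 : (‖x‖ ^ (p-1)) ^ 2 = ‖x‖ ^ (2 * p - 2) := by rw [← pow_mul]; congr 1; omega
    have hg2 : pd u 1 x ^ 2 ≤ ‖fderiv ℝ u x‖ ^ 2 := by
      have h1 : |pd u 1 x| ≤ ‖fderiv ℝ u x‖ := by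
        have h2 := (fderiv ℝ u x).le_opNorm (ee 1)
        rw [norm_ee, mul_one, Real.norm_eq_abs] at h2
        exact h2
      calc pd u 1 x ^ 2 = |pd u 1 x| ^ 2 := (sq_abs _).symm
        _ ≤ ‖fderiv ℝ u x‖ ^ 2 := by
            apply pow_le_pow_left₀ (abs_nonneg _) h1
    have hmono : 16 * (p:ℝ)^2 * (‖x‖ ^ (2 * p - 2) * pd u 1 x ^ 2)
        ≤ 16 * (p:ℝ)^2 * (‖x‖ ^ (2 * p - 2) * ‖fderiv ℝ u x‖ ^ 2) := by
      apply mul_le_mul_of_nonneg_left _ (by positivity)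
      apply mul_le_mul_of_nonneg_left hg2 (by positivity)
    calc 2 * (pd u 1 x *
        (pd (fun y : E2' => ‖y‖ ^ (2 * p)) 1 x * pd (pd u 0) 0 x
          - pd (fun y : E2' => ‖y‖ ^ (2 * p)) 0 x * pd (pd u 1) 0 x))
        = 2 * pd u 1 x *
          (pd (fun y : E2' => ‖y‖ ^ (2 * p)) 1 x * pd (pd u 0) 0 x
            - pd (fun y : E2' => ‖y‖ ^ (2 * p)) 0 x * pd (pd u 1) 0 x) := by ring
      _ ≤ (1/2) * ((‖x‖ ^ p * pd (pd u 0) 0 x) ^ 2 + (‖x‖ ^ p * pd (pd u 1) 0 x) ^ 2)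
          + 16 * (p:ℝ)^2 * (‖x‖ ^ (p-1) * pd u 1 x) ^ 2 := hb
      _ = (1/2) * (‖x‖ ^ (2 * p) * (pd (pd u 0) 0 x ^ 2 + pd (pd u 1) 0 x ^ 2))
          + 16 * (p:ℝ)^2 * (‖x‖ ^ (2 * p - 2) * pd u 1 x ^ 2) := by
          rw [mul_pow, mul_pow, mul_pow, hnp2, hnp12]; ring
      _ ≤ _ := by linarith [hmono]
  -- Step 5: integrate the pointwise bound
  have hJint : (∫ x, 2 * (pd u 1 x *
      (pd (fun y : E2' => ‖y‖ ^ (2 * p)) 1 x * pd (pd u 0) 0 x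
        - pd (fun y : E2' => ‖y‖ ^ (2 * p)) 0 x * pd (pd u 1) 0 x)))
      ≤ (1/2) * (∫ x, ‖x‖ ^ (2 * p) * (pd (pd u 0) 0 x ^ 2 + pd (pd u 1) 0 x ^ 2))
        + 16 * (p:ℝ)^2 * (∫ x : E2', ‖x‖ ^ (2 * p - 2) * ‖fderiv ℝ u x‖ ^ 2) := by
    calc (∫ x, 2 * (pd u 1 x *
        (pd (fun y : E2' => ‖y‖ ^ (2 * p)) 1 x * pd (pd u 0) 0 x
          - pd (fun y : E2' => ‖y‖ ^ (2 * p)) 0 x * pd (pd u 1) 0 x)))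
        ≤ ∫ x, ((1/2) * (‖x‖ ^ (2 * p) * (pd (pd u 0) 0 x ^ 2 + pd (pd u 1) 0 x ^ 2))
            + 16 * (p:ℝ)^2 * (‖x‖ ^ (2 * p - 2) * ‖fderiv ℝ u x‖ ^ 2)) := by
          apply integral_mono (intJ.const_mul 2)
            ((intM.const_mul _).add (intR2.const_mul _)) hpt
      _ = _ := by
          rw [integral_add (intM.const_mul _) (intR2.const_mul _),
            integral_const_mul, integral_const_mul]
  rw [integral_const_mul] at hJint
  -- Step 6: M ≤ L
  have hML : (∫ x, ‖x‖ ^ (2 * p) * (pd (pd u 0) 0 x ^ 2 + pd (pd u 1) 0 x ^ 2))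
      ≤ ∫ x, ‖x‖ ^ (2 * p) *
        (pd (pd u 0) 0 x ^ 2 + pd (pd u 1) 0 x ^ 2 +
          (pd (pd u 0) 1 x ^ 2 + pd (pd u 1) 1 x ^ 2)) := by
    apply integral_mono intM intL
    intro x
    dsimp only
    have h1 : (0:ℝ) ≤ ‖x‖ ^ (2 * p) := by positivity
    nlinarith [sq_nonneg (pd (pd u 0) 1 x), sq_nonneg (pd (pd u 1) 1 x)]
  -- Step 7: positivity of right-hand sides
  have hR1pos : (0:ℝ) ≤ ∫ x, ‖x‖ ^ (2 * p) * (pd (pd u 0) 0 x + pd (pd u 1) 1 x) ^ 2 :=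
    integral_nonneg fun x => by positivity
  have hR2pos : (0:ℝ) ≤ ∫ x : E2', ‖x‖ ^ (2 * p - 2) * ‖fderiv ℝ u x‖ ^ 2 :=
    integral_nonneg fun x => by positivity
  -- Final combination
  have hpcast : (p:ℝ) ≤ 2 := by exact_mod_cast hp2
  have hppos : (0:ℝ) ≤ (p:ℝ) := Nat.cast_nonneg p
  have hcoef : 16 * (p:ℝ)^2 * (∫ x : E2', ‖x‖ ^ (2 * p - 2) * ‖fderiv ℝ u x‖ ^ 2)
      ≤ 64 * (∫ x : E2', ‖x‖ ^ (2 * p - 2) * ‖fderiv ℝ u x‖ ^ 2) := by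
    apply mul_le_mul_of_nonneg_right _ hR2pos
    nlinarith [hpcast, hppos]
  linarith [hE1, key1, key2, hBA, hJint, hML, hR1pos, hR2pos, hcoef]

end WeightedHessianAux

/-- Weighted second-derivative control: for `p ∈ {1,2}` there is `C > 0` such that for all
`u ∈ C_c^∞(ℝ²)`, `∫ |x|^{2p}|∇²u|² ≤ C(∫ |x|^{2p}|Δu|² + ∫ |x|^{2p−2}|∇u|²)`. -/
theorem weighted_hessian_control (p : ℕ) (hp : p = 1 ∨ p = 2) :
    ∃ C : ℝ, 0 < C ∧
      ∀ u : EuclideanSpace ℝ (Fin 2) → ℝ, ContDiff ℝ (⊤ : ℕ∞) u → HasCompactSupport u →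
        (∫ x : EuclideanSpace ℝ (Fin 2),
            ‖x‖ ^ (2 * p) * ∑ i : Fin 2, ∑ j : Fin 2, (secondPartial u i j x) ^ 2)
          ≤ C * ((∫ x : EuclideanSpace ℝ (Fin 2),
                ‖x‖ ^ (2 * p) * (∑ i : Fin 2, secondPartial u i i x) ^ 2)
              + ∫ x : EuclideanSpace ℝ (Fin 2), ‖x‖ ^ (2 * p - 2) * ‖fderiv ℝ u x‖ ^ 2) := by
  have hp1 : 1 ≤ p := by rcases hp with h | h <;> omega
  have hp2 : p ≤ 2 := by rcases hp with h | h <;> omega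
  refine ⟨128, by norm_num, ?_⟩
  intro u hu hsu
  have hsp : ∀ (i j : Fin 2) (x : E2'), secondPartial u i j x = pd (pd u j) i x :=
    fun i j x => rfl
  simp only [Fin.sum_univ_two, hsp]
  exact main_aux p hp1 hp2 u hu hsu
end
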